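/- arXiv:1303.3711 — 4 statements merged into one kernel-verified Lean document; each statement's English description precedes it below -/
import Mathlib

section
/- Let B be a unital complex star algebra and let N ⊆ B be a unital ℝ-subalgebra that is closed under the star operation and satisfies N ∩ i·N = {0}. Then M = {x + i·y : x, y ∈ N} is a unital ℂ-subalgebra of B closed under star, every element of M has a unique representation x + i·y with x, y ∈ N, and the map α : M → M defined by α(x + i·y) = x* + i·y* (for x, y ∈ N) is well defined, ℂ-linear, and satisfies α(z*) = α(z)*, α(zw) = α(w)α(z) and α(α(z)) = z for all z, w ∈ M; i.e., α is an involutive *-antiautomorphism of M. -/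
set_option linter.unusedSectionVars false

section Aux
variable {B : Type*} [Ring B] [Algebra ℝ B] [Algebra ℂ B] [IsScalarTower ℝ ℂ B]
  [StarRing B] [StarModule ℂ B]

lemma aux_real_smul (r : ℝ) (a : B) : (r : ℂ) • a = r • a := by
  rw [← IsScalarTower.algebraMap_smul ℂ r a, Complex.coe_algebraMap]

lemma aux_II (a : B) : Complex.I • Complex.I • a = -a := by
  rw [smul_smul, Complex.I_mul_I, neg_one_smul]

lemma aux_smul_comm (r : ℝ) (a : B) :
    r • Complex.I • a = Complex.I • r • a := by
  rw [← aux_real_smul, ← aux_real_smul, smul_smul, smul_smul, mul_comm]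

lemma aux_star_rsmul (r : ℝ) (a : B) : star (r • a) = r • star a := by
  rw [← aux_real_smul, star_smul, Complex.star_def, Complex.conj_ofReal, aux_real_smul]

lemma aux_star_smulI (a : B) : star (Complex.I • a) = Complex.I • (-star a) := by
  rw [star_smul, Complex.star_def, Complex.conj_I, neg_smul, smul_neg]

lemma aux_add_rep (x y x' y' : B) :
    (x + Complex.I • y) + (x' + Complex.I • y') = (x + x') + Complex.I • (y + y') := by
  rw [smul_add]; abel

lemma aux_csmul (c : ℂ) (a : B) : c • a = c.re • a + Complex.I • (c.im • a) := by
  conv_lhs => rw [← Complex.re_add_im c]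
  rw [add_smul, mul_comm, mul_smul, aux_real_smul, aux_real_smul]

lemma aux_csmul_rep (c : ℂ) (x y : B) :
    c • (x + Complex.I • y)
      = (c.re • x - c.im • y) + Complex.I • (c.re • y + c.im • x) := by
  rw [smul_add, aux_csmul c x, aux_csmul c (Complex.I • y), aux_smul_comm c.re,
    aux_smul_comm c.im, aux_II, smul_add]
  abel

lemma aux_mul_rep (x y x' y' : B) :
    (x + Complex.I • y) * (x' + Complex.I • y') =
      (x * x' - y * y') + Complex.I • (x * y' + y * x') := by
  rw [add_mul, mul_add, mul_add, smul_mul_assoc, smul_mul_assoc, mul_smul_comm,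
    mul_smul_comm, aux_II, smul_add]
  abel

lemma aux_star_rep (x y : B) :
    star (x + Complex.I • y) = star x + Complex.I • (-(star y)) := by
  rw [star_add, aux_star_smulI]

end Aux

/-- If `N` is a unital ℝ-subalgebra of a unital complex star algebra `B`, closed under star
and with `N ∩ i·N = {0}`, then `M = {x + i·y : x, y ∈ N}` is a unital ℂ-subalgebra closed
under star, representations `x + i·y` are unique, and `α(x + i·y) = x* + i·y*` defines an
involutive *-antiautomorphism of `M`. -/
theorem stmt_3 {B : Type*} [Ring B] [Algebra ℝ B] [Algebra ℂ B] [IsScalarTower ℝ ℂ B]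
    [StarRing B] [StarModule ℂ B]
    (N : Subalgebra ℝ B)
    (hNstar : ∀ x ∈ N, star x ∈ N)
    (hNcap : ∀ x ∈ N, ∀ y ∈ N, x = Complex.I • y → x = 0)
    (Mset : Set B) (hMset : Mset = {z : B | ∃ x ∈ N, ∃ y ∈ N, z = x + Complex.I • y}) :
    (1 : B) ∈ Mset
    ∧ (∀ z ∈ Mset, ∀ w ∈ Mset, z + w ∈ Mset)
    ∧ (∀ z ∈ Mset, ∀ w ∈ Mset, z * w ∈ Mset)
    ∧ (∀ (c : ℂ), ∀ z ∈ Mset, c • z ∈ Mset)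
    ∧ (∀ z ∈ Mset, star z ∈ Mset)
    ∧ (∀ x ∈ N, ∀ y ∈ N, ∀ x' ∈ N, ∀ y' ∈ N,
        x + Complex.I • y = x' + Complex.I • y' → x = x' ∧ y = y')
    ∧ ∃ α : B → B,
        (∀ z ∈ Mset, α z ∈ Mset)
        ∧ (∀ x ∈ N, ∀ y ∈ N, α (x + Complex.I • y) = star x + Complex.I • star y)
        ∧ (∀ (c : ℂ), ∀ z ∈ Mset, ∀ w ∈ Mset, α (c • z + w) = c • α z + α w)
        ∧ (∀ z ∈ Mset, α (star z) = star (α z))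
        ∧ (∀ z ∈ Mset, ∀ w ∈ Mset, α (z * w) = α w * α z)
        ∧ (∀ z ∈ Mset, α (α z) = z) := by
  classical
  subst hMset
  -- uniqueness of representations
  have uniq : ∀ x ∈ N, ∀ y ∈ N, ∀ x' ∈ N, ∀ y' ∈ N,
      x + Complex.I • y = x' + Complex.I • y' → x = x' ∧ y = y' := by
    intro x hx y hy x' hx' y' hy' h
    have h1 : x - x' = Complex.I • (y' - y) := by
      rw [smul_sub, sub_eq_sub_iff_add_eq_add, h, add_comm]
    have hx0 : x - x' = 0 := hNcap _ (N.sub_mem hx hx') _ (N.sub_mem hy' hy) h1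
    have hxx : x = x' := by rwa [sub_eq_zero] at hx0
    have h2 : Complex.I • (y' - y) = 0 := by rw [← h1, hx0]
    have hyy : y' - y = 0 := by
      have := congrArg (fun a => (-Complex.I) • a) h2
      simpa [smul_smul, Complex.I_mul_I] using this
    exact ⟨hxx, (sub_eq_zero.mp hyy).symm⟩
  -- the map α
  set α : B → B := fun z =>
    if h : ∃ x ∈ N, ∃ y ∈ N, z = x + Complex.I • y then
      star h.choose + Complex.I • star h.choose_spec.2.choose
    else 0 with hαdef
  have fspec : ∀ x ∈ N, ∀ y ∈ N,
      α (x + Complex.I • y) = star x + Complex.I • star y := by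
    intro x hx y hy
    have hz : ∃ x' ∈ N, ∃ y' ∈ N, x + Complex.I • y = x' + Complex.I • y' :=
      ⟨x, hx, y, hy, rfl⟩
    have h1 := hz.choose_spec.1
    have h2 := hz.choose_spec.2.choose_spec.1
    have h3 := hz.choose_spec.2.choose_spec.2
    have hu := uniq x hx y hy _ h1 _ h2 h3
    have e1 := congrArg star hu.1.symm
    have e2 := congrArg star hu.2.symm
    rw [hαdef]
    simp only
    rw [dif_pos hz, e1, e2]
  refine ⟨⟨1, N.one_mem, 0, N.zero_mem, by simp⟩, ?_, ?_, ?_, ?_, uniq, α, ?_, fspec, ?_, ?_, ?_, ?_⟩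
  · rintro z ⟨x, hx, y, hy, rfl⟩ w ⟨x', hx', y', hy', rfl⟩
    exact ⟨x + x', N.add_mem hx hx', y + y', N.add_mem hy hy', aux_add_rep x y x' y'⟩
  · rintro z ⟨x, hx, y, hy, rfl⟩ w ⟨x', hx', y', hy', rfl⟩
    exact ⟨x * x' - y * y', N.sub_mem (N.mul_mem hx hx') (N.mul_mem hy hy'),
      x * y' + y * x', N.add_mem (N.mul_mem hx hy') (N.mul_mem hy hx'),
      aux_mul_rep x y x' y'⟩
  · rintro c z ⟨x, hx, y, hy, rfl⟩
    exact ⟨c.re • x - c.im • y, N.sub_mem (N.smul_mem hx c.re) (N.smul_mem hy c.im),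
      c.re • y + c.im • x, N.add_mem (N.smul_mem hy c.re) (N.smul_mem hx c.im),
      aux_csmul_rep c x y⟩
  · rintro z ⟨x, hx, y, hy, rfl⟩
    exact ⟨star x, hNstar x hx, -(star y), N.neg_mem (hNstar y hy), aux_star_rep x y⟩
  · rintro z ⟨x, hx, y, hy, rfl⟩
    rw [fspec x hx y hy]
    exact ⟨star x, hNstar x hx, star y, hNstar y hy, rfl⟩
  · rintro c z ⟨x, hx, y, hy, rfl⟩ w ⟨x', hx', y', hy', rfl⟩
    rw [aux_csmul_rep, aux_add_rep,
      fspec _ (N.add_mem (N.sub_mem (N.smul_mem hx c.re) (N.smul_mem hy c.im)) hx')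
        _ (N.add_mem (N.add_mem (N.smul_mem hy c.re) (N.smul_mem hx c.im)) hy'),
      fspec x hx y hy, fspec x' hx' y' hy', aux_csmul_rep, aux_add_rep]
    simp [star_sub, star_add, aux_star_rsmul]
  · rintro z ⟨x, hx, y, hy, rfl⟩
    rw [aux_star_rep, fspec _ (hNstar x hx) _ (N.neg_mem (hNstar y hy)),
      fspec x hx y hy, aux_star_rep]
    simp
  · rintro z ⟨x, hx, y, hy, rfl⟩ w ⟨x', hx', y', hy', rfl⟩
    rw [aux_mul_rep,
      fspec _ (N.sub_mem (N.mul_mem hx hx') (N.mul_mem hy hy'))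
        _ (N.add_mem (N.mul_mem hx hy') (N.mul_mem hy hx')),
      fspec x hx y hy, fspec x' hx' y' hy', aux_mul_rep]
    simp only [star_sub, star_add, star_mul]
    rw [add_comm (star y' * star x)]
  · rintro z ⟨x, hx, y, hy, rfl⟩
    rw [fspec x hx y hy, fspec _ (hNstar x hx) _ (hNstar y hy), star_star, star_star]
end

section
/- Let A be a unital star ℝ-algebra and let S ⊆ A be a set generating A as an ℝ-algebra (the ℝ-subalgebra generated by S is all of A), such that every x ∈ S satisfies x* = x or x* = −x. Equip the 2×2 matrix algebra M₂(A) with the star operation given by the transpose with entrywise star, i.e. [[a,b],[c,d]]* = [[a*,c*],[b*,d*]]. Then the set T consisting of the matrices [[1,0],[0,0]] and [[0,1],[1,0]], together with the matrices [[x,0],[0,0]] for x ∈ S with x* = x and the matrices [[0,x],[−x,0]] for x ∈ S with x* = −x, consists of self-adjoint elements of M₂(A) and generates M₂(A) as an ℝ-algebra. -/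
open Matrix

/-- If a unital star ℝ-algebra `A` is generated by a set `S` of symmetric or antisymmetric
elements, then `M₂(A)` (with the entrywise-star transpose involution) is generated by the
set `T` of self-adjoint matrices consisting of `[[1,0],[0,0]]`, `[[0,1],[1,0]]`,
`[[x,0],[0,0]]` for symmetric `x ∈ S` and `[[0,x],[−x,0]]` for antisymmetric `x ∈ S`. -/
theorem stmt_7 {A : Type*} [Ring A] [Algebra ℝ A] [StarRing A] [StarModule ℝ A]
    (S : Set A) (hgen : Algebra.adjoin ℝ S = ⊤)
    (hS : ∀ x ∈ S, star x = x ∨ star x = -x)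
    (T : Set (Matrix (Fin 2) (Fin 2) A))
    (hT : T = {!![(1 : A), 0; 0, 0], !![(0 : A), 1; 1, 0]}
        ∪ ((fun x : A => !![x, 0; 0, 0]) '' {x ∈ S | star x = x})
        ∪ ((fun x : A => !![0, x; -x, 0]) '' {x ∈ S | star x = -x})) :
    (∀ m ∈ T, star m = m) ∧ Algebra.adjoin ℝ T = ⊤ := by
  subst hT
  constructor
  · rintro m hm
    simp only [Set.mem_union, Set.mem_insert_iff, Set.mem_singleton_iff, Set.mem_image,
      Set.mem_setOf_eq] at hm
    rcases hm with ((rfl | rfl) | ⟨x, ⟨hxS, hx⟩, rfl⟩) | ⟨x, ⟨hxS, hx⟩, rfl⟩ <;>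
      ext i j <;> fin_cases i <;> fin_cases j <;>
      simp [Matrix.star_apply, *]
  · set P := Algebra.adjoin ℝ
      (({!![(1 : A), 0; 0, 0], !![(0 : A), 1; 1, 0]}
        ∪ ((fun x : A => !![x, 0; 0, 0]) '' {x ∈ S | star x = x})
        ∪ ((fun x : A => !![0, x; -x, 0]) '' {x ∈ S | star x = -x})) : Set _) with hP
    have hE11 : !![(1 : A), 0; 0, 0] ∈ P := Algebra.subset_adjoin (by simp)
    have hF : !![(0 : A), 1; 1, 0] ∈ P := Algebra.subset_adjoin (by simp)
    have key : ∀ a : A, !![a, 0; 0, 0] ∈ P := by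
      let Q : Subalgebra ℝ A :=
        { carrier := {a : A | !![a, 0; 0, 0] ∈ P}
          mul_mem' := by
            intro a b ha hb
            simp only [Set.mem_setOf_eq] at ha hb ⊢
            have h := mul_mem ha hb
            have e : !![a, 0; 0, 0] * !![b, 0; 0, 0] = !![a * b, 0; 0, 0] := by
              ext i j; fin_cases i <;> fin_cases j <;> simp [Matrix.mul_fin_two]
            rwa [e] at h
          add_mem' := by
            intro a b ha hb
            simp only [Set.mem_setOf_eq] at ha hb ⊢
            have h := add_mem ha hb
            have e : !![a, 0; 0, 0] + !![b, 0; 0, 0] = !![a + b, 0; 0, 0] := by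
              ext i j; fin_cases i <;> fin_cases j <;> simp
            rwa [e] at h
          one_mem' := by
            simp only [Set.mem_setOf_eq]; exact hE11
          zero_mem' := by
            simp only [Set.mem_setOf_eq]
            have e : (0 : Matrix (Fin 2) (Fin 2) A) = !![(0 : A), 0; 0, 0] := by
              ext i j; fin_cases i <;> fin_cases j <;> simp
            rw [← e]; exact zero_mem P
          algebraMap_mem' := by
            intro r
            simp only [Set.mem_setOf_eq]
            have h := SMulMemClass.smul_mem r hE11
            have e : r • !![(1 : A), 0; 0, 0] = !![algebraMap ℝ A r, 0; 0, 0] := by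
              ext i j; fin_cases i <;> fin_cases j <;>
                simp [Algebra.algebraMap_eq_smul_one]
            rwa [e] at h }
      have hSQ : S ⊆ (Q : Set A) := by
        intro x hx
        show !![x, 0; 0, 0] ∈ P
        rcases hS x hx with h | h
        · exact Algebra.subset_adjoin (Set.mem_union_left _ (Set.mem_union_right _ ⟨x, ⟨hx, h⟩, rfl⟩))
        · have hY : !![(0 : A), x; -x, 0] ∈ P :=
            Algebra.subset_adjoin (Set.mem_union_right _ ⟨x, ⟨hx, h⟩, rfl⟩)
          have hm := mul_mem (mul_mem hE11 hY) hF
          have e : !![(1 : A), 0; 0, 0] * !![(0 : A), x; -x, 0] * !![(0 : A), 1; 1, 0]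
              = !![x, 0; 0, 0] := by
            ext i j; fin_cases i <;> fin_cases j <;> simp [Matrix.mul_fin_two]
          rwa [e] at hm
      have hQtop : ∀ a : A, a ∈ Q := by
        intro a
        have := Algebra.adjoin_le hSQ
        rw [hgen] at this
        exact this trivial
      exact hQtop
    rw [eq_top_iff]
    rintro m -
    have hm : m = !![m 0 0, 0; 0, 0] + !![m 0 1, 0; 0, 0] * !![(0 : A), 1; 1, 0]
        + !![(0 : A), 1; 1, 0] * !![m 1 0, 0; 0, 0]
        + !![(0 : A), 1; 1, 0] * !![m 1 1, 0; 0, 0] * !![(0 : A), 1; 1, 0] := by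
      ext i j; fin_cases i <;> fin_cases j <;> simp [Matrix.mul_fin_two]
    rw [hm]
    exact add_mem (add_mem (add_mem (key _) (mul_mem (key _) hF)) (mul_mem hF (key _)))
      (mul_mem (mul_mem hF (key _)) hF)
end

section
/- In the free ℂ-algebra ℂ⟨X₀,X₁,X₂⟩ on three noncommuting self-adjoint variables, equipped with the canonical involution f ↦ f* that conjugates coefficients, fixes each generator Xᵢ, and reverses the order of words, the element f = i·(X₀X₁X₂ − X₂X₁X₀) satisfies f* = f, and yet f is not a sum of commutators: f does not belong to the ℂ-linear span of {pq − qp : p, q ∈ ℂ⟨X₀,X₁,X₂⟩}. (Thus f is a self-adjoint polynomial with zero trace on all triples of real symmetric matrices which is not cyclically equivalent to 0, giving a counterexample to Proposition 2.3 of Klep–Schweighofer.) -/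
/-- In the free ℂ-algebra on three noncommuting variables, the element
`f = i·(X₀X₁X₂ − X₂X₁X₀)` is fixed by the canonical involution (the map conjugating
coefficients, fixing the generators and reversing words), but `f` is not a sum of
commutators, i.e. `f` is not in the ℂ-linear span of `{pq − qp}`. -/
theorem stmt_12 :
    (∀ st : FreeAlgebra ℂ (Fin 3) → FreeAlgebra ℂ (Fin 3),
      (∀ x y, st (x + y) = st x + st y) →
      (∀ (c : ℂ) (x), st (c • x) = (starRingEnd ℂ c) • st x) →
      (∀ x y, st (x * y) = st y * st x) →
      (∀ i : Fin 3, st (FreeAlgebra.ι ℂ i) = FreeAlgebra.ι ℂ i) →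
      (∀ x, st (st x) = x) →
      st (Complex.I • (FreeAlgebra.ι ℂ (0 : Fin 3) * FreeAlgebra.ι ℂ (1 : Fin 3)
            * FreeAlgebra.ι ℂ (2 : Fin 3)
          - FreeAlgebra.ι ℂ (2 : Fin 3) * FreeAlgebra.ι ℂ (1 : Fin 3)
            * FreeAlgebra.ι ℂ (0 : Fin 3)))
        = Complex.I • (FreeAlgebra.ι ℂ (0 : Fin 3) * FreeAlgebra.ι ℂ (1 : Fin 3)
            * FreeAlgebra.ι ℂ (2 : Fin 3)
          - FreeAlgebra.ι ℂ (2 : Fin 3) * FreeAlgebra.ι ℂ (1 : Fin 3)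
            * FreeAlgebra.ι ℂ (0 : Fin 3)))
    ∧ Complex.I • (FreeAlgebra.ι ℂ (0 : Fin 3) * FreeAlgebra.ι ℂ (1 : Fin 3)
          * FreeAlgebra.ι ℂ (2 : Fin 3)
        - FreeAlgebra.ι ℂ (2 : Fin 3) * FreeAlgebra.ι ℂ (1 : Fin 3)
          * FreeAlgebra.ι ℂ (0 : Fin 3))
      ∉ Submodule.span ℂ {x : FreeAlgebra ℂ (Fin 3) | ∃ p q, x = p * q - q * p} := by
  constructor
  · intro st hadd hsmul hmul hgen hinv
    have hsub : ∀ x y, st (x - y) = st x - st y := by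
      intro x y
      have h := hadd (x - y) y
      rw [sub_add_cancel] at h
      exact eq_sub_of_add_eq h.symm
    have h1 : st (FreeAlgebra.ι ℂ (0 : Fin 3) * FreeAlgebra.ι ℂ (1 : Fin 3)
        * FreeAlgebra.ι ℂ (2 : Fin 3))
        = FreeAlgebra.ι ℂ (2 : Fin 3) * FreeAlgebra.ι ℂ (1 : Fin 3)
          * FreeAlgebra.ι ℂ (0 : Fin 3) := by
      rw [hmul, hmul, hgen, hgen, hgen, mul_assoc]
    have h2 : st (FreeAlgebra.ι ℂ (2 : Fin 3) * FreeAlgebra.ι ℂ (1 : Fin 3)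
        * FreeAlgebra.ι ℂ (0 : Fin 3))
        = FreeAlgebra.ι ℂ (0 : Fin 3) * FreeAlgebra.ι ℂ (1 : Fin 3)
          * FreeAlgebra.ι ℂ (2 : Fin 3) := by
      rw [hmul, hmul, hgen, hgen, hgen, mul_assoc]
    rw [hsmul, hsub, h1, h2, Complex.conj_I]
    module
  · intro hmem
    set A : Matrix (Fin 2) (Fin 2) ℂ := !![0, 1; 0, 0] with hA
    set B : Matrix (Fin 2) (Fin 2) ℂ := !![0, 0; 1, 0] with hB
    set C : Matrix (Fin 2) (Fin 2) ℂ := !![1, 0; 0, 0] with hC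
    set φ : FreeAlgebra ℂ (Fin 3) →ₐ[ℂ] Matrix (Fin 2) (Fin 2) ℂ :=
      FreeAlgebra.lift ℂ (fun i : Fin 3 => if i = 0 then A else if i = 1 then B else C)
      with hφ
    set L : FreeAlgebra ℂ (Fin 3) →ₗ[ℂ] ℂ :=
      (Matrix.traceLinearMap (Fin 2) ℂ ℂ).comp φ.toLinearMap with hL
    have hzero : L (Complex.I • (FreeAlgebra.ι ℂ (0 : Fin 3) * FreeAlgebra.ι ℂ (1 : Fin 3)
          * FreeAlgebra.ι ℂ (2 : Fin 3)
        - FreeAlgebra.ι ℂ (2 : Fin 3) * FreeAlgebra.ι ℂ (1 : Fin 3)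
          * FreeAlgebra.ι ℂ (0 : Fin 3))) = 0 := by
      refine Submodule.span_induction ?_ ?_ ?_ ?_ hmem
      · rintro x ⟨p, q, rfl⟩
        simp only [hL, LinearMap.comp_apply, AlgHom.toLinearMap_apply, map_sub, map_mul,
          Matrix.traceLinearMap_apply, Matrix.trace_sub, Matrix.trace_mul_comm (φ p) (φ q),
          sub_self]
      · simp
      · intro x y _ _ hx hy
        rw [map_add, hx, hy, add_zero]
      · intro c x _ hx
        rw [map_smul, hx, smul_zero]
    have hval : L (Complex.I • (FreeAlgebra.ι ℂ (0 : Fin 3) * FreeAlgebra.ι ℂ (1 : Fin 3)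
          * FreeAlgebra.ι ℂ (2 : Fin 3)
        - FreeAlgebra.ι ℂ (2 : Fin 3) * FreeAlgebra.ι ℂ (1 : Fin 3)
          * FreeAlgebra.ι ℂ (0 : Fin 3))) = Complex.I := by
      have e0 : φ (FreeAlgebra.ι ℂ (0 : Fin 3)) = A := by simp [hφ]
      have e1 : φ (FreeAlgebra.ι ℂ (1 : Fin 3)) = B := by simp [hφ]
      have e2 : φ (FreeAlgebra.ι ℂ (2 : Fin 3)) = C := by
        simp [hφ, show (2 : Fin 3) ≠ 0 by decide, show (2 : Fin 3) ≠ 1 by decide]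
      rw [hL]
      simp only [LinearMap.comp_apply, AlgHom.toLinearMap_apply, map_smul, map_sub, map_mul,
        e0, e1, e2, Matrix.traceLinearMap_apply]
      rw [hA, hB, hC]
      norm_num [Matrix.mul_fin_two, Matrix.smul_of, Matrix.trace_fin_two, Matrix.of_apply]
    rw [hzero] at hval
    exact Complex.I_ne_zero hval.symm
end

section
/- Let f ∈ ℂ⟨X₁,…,Xₙ⟩. Then f is cyclically equivalent to 0, i.e. f lies in the ℂ-linear span of the commutators {pq − qp : p, q ∈ ℂ⟨X₁,…,Xₙ⟩}, if and only if for every s ≥ 1 and every tuple A₁, …, Aₙ ∈ M_s(ℂ) of self-adjoint matrices, the evaluation of f at (A₁,…,Aₙ) has trace zero: trace(f(A₁,…,Aₙ)) = 0. -/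
/-!
The trace kills commutators, which gives one direction. Conversely, write each matrix as
`ℜ A + I • ℑ A`; the trace of `f` at `ℜ A + t • ℑ A` is a polynomial in `t` vanishing on `ℝ`, so
the trace of `f` vanishes at all tuples of matrices. For a word `l` of length `d`, evaluate `f` at
`t • E`, where the `E i` are the adjacency matrices of the `d`-cycle with edges labelled by `l`:
a word of length `d` contributes to the trace once for every rotation of `l` equal to it, so the
coefficient of `t ^ d` is the sum of the coefficients of `f` over the rotations of `l`, which
therefore vanishes (at `d = 0` and `1 × 1` matrices this is the constant term). Finally, modulo
commutators every word is congruent to the average of its rotations, and this averaging sends `f`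
to `0` exactly when all these rotation sums vanish.
-/

open Finset

section CommutatorSpan

variable (R A : Type*) [CommRing R] [Ring A] [Algebra R A]

def commutatorSpan : Submodule R A :=
  Submodule.span R {x | ∃ p q : A, x = p * q - q * p}

variable {R A}

lemma AlgHom.map_mem_commutatorSpan {B : Type*} [Ring B] [Algebra R B] (φ : A →ₐ[R] B) {x : A}
    (hx : x ∈ commutatorSpan R A) : φ x ∈ commutatorSpan R B := by
  have hle : (commutatorSpan R A).map φ.toLinearMap ≤ commutatorSpan R B := by
    rw [commutatorSpan, Submodule.map_span_le]
    rintro _ ⟨p, q, rfl⟩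
    exact Submodule.subset_span ⟨φ p, φ q, by simp⟩
  exact hle ⟨x, hx, rfl⟩

lemma Matrix.trace_eq_zero_of_mem_commutatorSpan {m : Type*} [Fintype m] [DecidableEq m]
    {x : Matrix m m R} (hx : x ∈ commutatorSpan R (Matrix m m R)) : x.trace = 0 := by
  have hle : commutatorSpan R (Matrix m m R) ≤ LinearMap.ker (Matrix.traceLinearMap m R R) := by
    refine Submodule.span_le.2 ?_
    rintro _ ⟨p, q, rfl⟩
    simp [Matrix.trace_mul_comm p q]
  exact hle hx

end CommutatorSpan

section Rotation

variable {α M : Type*} [AddCommMonoid M]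

lemma sum_range_rotate_length_sub (F : List α → M) (u : List α) :
    ∑ i ∈ range u.length, F (u.rotate (u.length - i)) = ∑ i ∈ range u.length, F (u.rotate i) := by
  calc ∑ i ∈ range u.length, F (u.rotate (u.length - i))
      = ∑ i ∈ range u.length, F (u.rotate (u.length - 1 - i + 1)) :=
        sum_congr rfl fun i hi => by have := mem_range.1 hi; congr 2; omega
    _ = ∑ i ∈ range u.length, F (u.rotate (i + 1)) :=
        sum_range_reflect (fun j => F (u.rotate (j + 1))) _
    _ = ∑ i ∈ range u.length, F (u.rotate i) := by
        cases u with
        | nil => simp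
        | cons x t =>
          rw [List.length_cons, sum_range_succ, sum_range_succ', List.rotate_zero]
          exact congrArg _ (congrArg F (List.rotate_length (x :: t)))

lemma sum_sum_ite_rotate_eq [DecidableEq α] (S : Finset (List α)) (F : List α → M)
    (hF : ∀ w ∉ S, F w = 0) (u : List α) :
    ∑ w ∈ S, ∑ i ∈ range w.length, (if w.rotate i = u then F w else 0) =
      ∑ i ∈ range u.length, F (u.rotate i) := by
  have hlen : ∀ w, ∑ i ∈ range w.length, (if w.rotate i = u then F w else 0) =
      ∑ i ∈ range u.length, (if w = u.rotate (u.length - i) then F w else 0) := by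
    intro w
    by_cases hwu : w.length = u.length
    · rw [hwu]
      refine sum_congr rfl fun i hi => if_congr ?_ rfl rfl
      rw [List.rotate_eq_iff, Nat.mod_eq_of_lt (mem_range.1 hi)]
    · refine (sum_eq_zero fun i _ => if_neg ?_).trans (sum_eq_zero fun i _ => if_neg ?_).symm
      · rintro rfl
        exact hwu (List.length_rotate w i).symm
      · rintro rfl
        exact hwu (List.length_rotate u _)
  have hS : ∀ i, ∑ w ∈ S, (if w = u.rotate (u.length - i) then F w else 0) =
      F (u.rotate (u.length - i)) := fun i => by
    rw [sum_ite_eq']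
    exact ite_eq_left_iff.2 fun h => (hF _ h).symm
  simp_rw [hlen]
  rw [sum_comm]
  simp_rw [hS]
  exact sum_range_rotate_length_sub F u

end Rotation

section CyclicAveraging

open MonoidAlgebra

variable {α : Type*}

lemma single_sub_single_rotate_mem_commutatorSpan {R : Type*} [CommRing R] (l : List α) (i : ℕ)
    (a : R) : single (FreeMonoid.ofList l) a - single (FreeMonoid.ofList (l.rotate i)) a ∈
      commutatorSpan R R[FreeMonoid α] := by
  obtain ⟨u, v, rfl, hrot⟩ : ∃ u v, l = u ++ v ∧ l.rotate i = v ++ u :=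
    ⟨_, _, (List.take_append_drop _ l).symm, List.rotate_eq_drop_append_take_mod⟩
  rw [hrot]
  refine Submodule.subset_span ⟨single (FreeMonoid.ofList u) a, single (FreeMonoid.ofList v) 1, ?_⟩
  simp [single_mul_single]

theorem mem_commutatorSpan_of_sum_rotate_eq_zero {k : Type*} [Field k] [CharZero k]
    (g : k[FreeMonoid α]) (h0 : g.coeff 1 = 0)
    (hrot : ∀ l : List α, ∑ i ∈ range l.length, g.coeff (FreeMonoid.ofList (l.rotate i)) = 0) :
    g ∈ commutatorSpan k k[FreeMonoid α] := by
  classical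
  set S : Finset (List α) := g.coeff.support.map FreeMonoid.toList.toEmbedding
  set G : List α → k := fun l => g.coeff (FreeMonoid.ofList l)
  -- `T` replaces every word of `g` by the average of its rotations
  set T : k[FreeMonoid α] := ∑ l ∈ S, ∑ i ∈ range l.length,
    single (FreeMonoid.ofList (l.rotate i)) (G l / l.length)
  have hS : ∀ l, l ∉ S → G l = 0 := fun l hl => by simpa [S, G] using hl
  have hg : g = ∑ l ∈ S, single (FreeMonoid.ofList l) (G l) := by
    rw [sum_map]
    simpa [G, Finsupp.sum] using (sum_coeff_single g).symm
  have hT : T = 0 := by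
    refine MonoidAlgebra.ext (Finsupp.ext fun w => ?_)
    obtain ⟨u, rfl⟩ := FreeMonoid.ofList.surjective w
    have hcount := sum_sum_ite_rotate_eq S (fun l => G l / l.length)
      (fun l hl => by simp [hS l hl]) u
    simp only [T, coeff_sum, Finsupp.finsetSum_apply, coeff_single, Finsupp.single_apply,
      EmbeddingLike.apply_eq_iff_eq]
    simp_rw [hcount, List.length_rotate, ← sum_div]
    rw [show ∑ i ∈ range u.length, G (u.rotate i) = 0 from hrot u, zero_div]
    rfl
  have hgT : g - T ∈ commutatorSpan k k[FreeMonoid α] := by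
    nth_rewrite 1 [hg]
    rw [← sum_sub_distrib]
    refine Submodule.sum_mem _ fun l hl => ?_
    have hlen : (l.length : k) ≠ 0 := by
      have hGl : G l ≠ 0 := by simpa [S, G] using hl
      intro h
      rw [List.length_eq_zero_iff.1 (Nat.cast_eq_zero.1 h)] at hGl
      exact hGl h0
    have hsplit : single (FreeMonoid.ofList l) (G l) =
        ∑ i ∈ range l.length, single (FreeMonoid.ofList l) (G l / l.length) := by
      rw [sum_const, card_range, smul_single, nsmul_eq_mul, mul_div_cancel₀ _ hlen]
    rw [hsplit, ← sum_sub_distrib]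
    exact Submodule.sum_mem _ fun i _ => single_sub_single_rotate_mem_commutatorSpan l i _
  simpa [hT] using hgT

end CyclicAveraging

section TestMatrices

open Matrix Polynomial

variable {α m k : Type*} [Fintype m] [DecidableEq m]

lemma FreeMonoid.lift_smul_apply {R A : Type*} [CommSemiring R] [Semiring A] [Algebra R A]
    (t : R) (f : α → A) (w : FreeMonoid α) :
    FreeMonoid.lift (t • f) w = t ^ w.length • FreeMonoid.lift f w := by
  rw [FreeMonoid.lift_apply, FreeMonoid.lift_apply, FreeMonoid.length]
  induction w.toList with
  | nil => simp
  | cons x l ih => simp [ih, pow_succ', mul_smul, smul_comm (t ^ l.length) t]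

/-- The sum is the coefficient of `t ^ d` in the polynomial `t ↦ trace (g (t • A))`. -/
theorem sum_coeff_mul_trace_eq_zero_of_forall_smul [CommRing k] [IsDomain k] [Infinite k]
    (g : MonoidAlgebra k (FreeMonoid α)) (A : α → Matrix m m k)
    (h : ∀ t : k, trace (MonoidAlgebra.lift k _ _ (FreeMonoid.lift (t • A)) g) = 0) (d : ℕ) :
    ∑ w ∈ g.coeff.support with w.length = d, g.coeff w * trace (FreeMonoid.lift A w) = 0 := by
  classical
  set q : k[X] :=
    ∑ w ∈ g.coeff.support, C (g.coeff w * trace (FreeMonoid.lift A w)) * X ^ w.length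
  have hq : q = 0 := Polynomial.funext fun t => by
    rw [eval_zero, ← h t]
    simp only [q, eval_finsetSum, MonoidAlgebra.lift_apply, Finsupp.sum, trace_sum, trace_smul,
      FreeMonoid.lift_smul_apply, eval_mul, eval_C, eval_pow, eval_X, smul_eq_mul]
    exact sum_congr rfl fun w _ => by ring
  have hd := congrArg (coeff · d) hq
  simp only [q, finsetSum_coeff, coeff_C_mul_X_pow, coeff_zero] at hd
  simpa only [sum_filter, eq_comm] using hd

/-- `edgeMatrix f c i` is the adjacency matrix of the edges `a → f a` of the graph of `f` that
start at a vertex of label `c a = i`. -/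
def edgeMatrix [CommSemiring k] [DecidableEq α] (f : m → m) (c : m → α) (i : α) : Matrix m m k :=
  of fun a b => if c a = i ∧ b = f a then 1 else 0

lemma prod_map_edgeMatrix_apply [CommSemiring k] [DecidableEq α] (f : m → m) (c : m → α)
    (w : List α) (a b : m) :
    (w.map (edgeMatrix (k := k) f c)).prod a b =
      if b = f^[w.length] a ∧ w = (List.range w.length).map (fun j => c (f^[j] a))
      then 1 else 0 := by
  induction w generalizing a with
  | nil => simp [one_apply, eq_comm]
  | cons x w ih =>
    rw [List.map_cons, List.prod_cons, mul_apply, sum_eq_single (f a)]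
    · simp only [edgeMatrix, of_apply, ih, List.length_cons, List.range_succ_eq_map, List.map_cons,
        List.map_map, Function.iterate_succ_apply]
      rcases eq_or_ne (c a) x with rfl | hx
      · simp [Function.comp_def]
      · simp [hx, hx.symm]
    · intro e _ he
      simp [edgeMatrix, he]
    · simp

lemma Fin.val_iterate_add_one {d : ℕ} [NeZero d] (a : Fin d) (j : ℕ) :
    ((· + 1)^[j] a).val = (a.val + j) % d := by
  induction j with
  | zero => simp [Nat.mod_eq_of_lt a.isLt]
  | succ j ih =>
    rw [Function.iterate_succ_apply', Fin.val_add, ih, Fin.val_one', Nat.add_mod_mod,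
      Nat.mod_add_mod, Nat.add_assoc]

lemma trace_prod_map_edgeMatrix_add_one [CommSemiring k] [DecidableEq α] (l : List α)
    [NeZero l.length] (w : List α) (hw : w.length = l.length) :
    trace ((w.map (edgeMatrix (k := k) (· + 1) l.get)).prod) =
      ∑ a : Fin l.length, if w = l.rotate a then 1 else 0 := by
  refine sum_congr rfl fun a _ => ?_
  have hcycle : (· + 1)^[w.length] a = a := by
    ext
    rw [Fin.val_iterate_add_one, hw, Nat.add_mod_right, Nat.mod_eq_of_lt a.isLt]
  have hwalk : (List.range w.length).map (fun j => l.get ((· + 1)^[j] a)) = l.rotate a := by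
    refine List.ext_getElem (by simp [hw]) fun j _ _ => ?_
    simp only [List.getElem_map, List.getElem_range, List.get_eq_getElem, List.getElem_rotate,
      Fin.val_iterate_add_one, Nat.add_comm]
  rw [diag_apply, prod_map_edgeMatrix_apply, hwalk]
  simp [hcycle]

theorem coeff_one_eq_zero_of_forall_trace [CommRing k] [IsDomain k] [Infinite k]
    (g : MonoidAlgebra k (FreeMonoid α))
    (h : ∀ A : α → Matrix (Fin 1) (Fin 1) k,
      trace (MonoidAlgebra.lift k _ _ (FreeMonoid.lift A) g) = 0) :
    g.coeff 1 = 0 := by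
  classical
  have h0 := sum_coeff_mul_trace_eq_zero_of_forall_smul g 0 (fun t => h _) 0
  simp only [FreeMonoid.length_eq_zero, sum_filter, sum_ite_eq', map_one, trace_one] at h0
  simpa using h0

theorem sum_rotate_eq_zero_of_forall_trace [CommRing k] [IsDomain k] [Infinite k]
    (g : MonoidAlgebra k (FreeMonoid α))
    (h : ∀ s, 1 ≤ s → ∀ A : α → Matrix (Fin s) (Fin s) k,
      trace (MonoidAlgebra.lift k _ _ (FreeMonoid.lift A) g) = 0) (l : List α) :
    ∑ i ∈ range l.length, g.coeff (FreeMonoid.ofList (l.rotate i)) = 0 := by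
  classical
  rcases eq_or_ne l [] with rfl | hl
  · simp
  have : NeZero l.length := ⟨by simpa using hl⟩
  have hd := sum_coeff_mul_trace_eq_zero_of_forall_smul g (edgeMatrix (· + 1) l.get)
    (fun t => h _ (Nat.one_le_iff_ne_zero.2 (NeZero.ne _)) _) l.length
  have htrace : ∀ w ∈ {w ∈ g.coeff.support | w.length = l.length},
      g.coeff w * trace (FreeMonoid.lift (edgeMatrix (· + 1) l.get) w) =
        ∑ a : Fin l.length, if w = FreeMonoid.ofList (l.rotate a) then g.coeff w else 0 := by
    intro w hw
    rw [FreeMonoid.lift_apply, trace_prod_map_edgeMatrix_add_one _ _ (mem_filter.1 hw).2, mul_sum]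
    simp [← Equiv.eq_symm_apply]
  rw [sum_congr rfl htrace, sum_comm] at hd
  rw [← Fin.sum_univ_eq_sum_range (fun i => g.coeff (FreeMonoid.ofList (l.rotate i))), ← hd]
  refine sum_congr rfl fun a _ => ?_
  rw [sum_ite_eq']
  split_ifs with hmem
  · rfl
  · exact Finsupp.notMem_support_iff.1 fun hs =>
      hmem (mem_filter.2 ⟨hs, by simp [FreeMonoid.length]⟩)

end TestMatrices

section SelfAdjoint

open Matrix Polynomial ComplexStarModule

variable {α m : Type*} [Fintype m] [DecidableEq m]

lemma aeval_trace_lift {R : Type*} [CommRing R] (B : α → Matrix m m R[X])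
    (f : FreeAlgebra R α) (t : R) :
    aeval t (trace (FreeAlgebra.lift R B f)) =
      trace (FreeAlgebra.lift R (fun i => (B i).map (aeval t)) f) := by
  have hcomp : (aeval t).mapMatrix.comp (FreeAlgebra.lift R B) =
      FreeAlgebra.lift R (fun i => (B i).map (aeval t)) := by
    ext i
    simp
  rw [AddMonoidHom.map_trace, ← AlgHom.mapMatrix_apply, ← AlgHom.comp_apply, hcomp]

theorem trace_lift_eq_zero_of_forall_isSelfAdjoint (f : FreeAlgebra ℂ α)
    (h : ∀ A : α → Matrix m m ℂ, (∀ i, IsSelfAdjoint (A i)) →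
      trace (FreeAlgebra.lift ℂ A f) = 0)
    (A : α → Matrix m m ℂ) : trace (FreeAlgebra.lift ℂ A f) = 0 := by
  set p : ℂ[X] := trace (FreeAlgebra.lift ℂ
    (fun i => (ℜ (A i) : Matrix m m ℂ).map C + (X : ℂ[X]) • (ℑ (A i) : Matrix m m ℂ).map C) f)
  have hp : ∀ t : ℂ, aeval t p =
      trace (FreeAlgebra.lift ℂ (fun i => (ℜ (A i) : Matrix m m ℂ) + t • ℑ (A i)) f) := by
    intro t
    rw [aeval_trace_lift]
    congr 3
    ext i a b
    simp
    ring
  have hreal : ∀ r : ℝ, p.IsRoot r := fun r => by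
    rw [IsRoot, ← coe_aeval_eq_eval, hp]
    exact h _ fun i =>
      (ℜ (A i)).prop.add (IsSelfAdjoint.smul (Complex.conj_ofReal r) (ℑ (A i)).prop)
  have hp0 : p = 0 := p.eq_zero_of_infinite_isRoot <|
    Set.infinite_of_injective_forall_mem Complex.ofReal_injective hreal
  simpa [hp0, realPart_add_I_smul_imaginaryPart] using (hp Complex.I).symm

end SelfAdjoint

lemma FreeAlgebra.lift_apply_eq_monoidAlgebra_lift {R α A : Type*} [CommRing R] [Ring A]
    [Algebra R A] (f : α → A) (x : FreeAlgebra R α) :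
    FreeAlgebra.lift R f x =
      MonoidAlgebra.lift R A (FreeMonoid α) (FreeMonoid.lift f) (equivMonoidAlgebraFreeMonoid x) := by
  have h : FreeAlgebra.lift R f = (MonoidAlgebra.lift R A (FreeMonoid α) (FreeMonoid.lift f)).comp
      (equivMonoidAlgebraFreeMonoid (R := R) (X := α)).toAlgHom := by
    ext i
    simp [equivMonoidAlgebraFreeMonoid]
  exact DFunLike.congr_fun h x

/-- A noncommutative complex polynomial `f` is cyclically equivalent to `0` (i.e. lies in
the ℂ-linear span of commutators) if and only if its trace vanishes at every tuple of
self-adjoint complex matrices of every size `s ≥ 1`. -/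
theorem stmt_15 {n : ℕ} (f : FreeAlgebra ℂ (Fin n)) :
    f ∈ Submodule.span ℂ {x : FreeAlgebra ℂ (Fin n) | ∃ p q, x = p * q - q * p}
    ↔ ∀ s : ℕ, 1 ≤ s → ∀ A : Fin n → Matrix (Fin s) (Fin s) ℂ,
        (∀ i, star (A i) = A i) →
        Matrix.trace ((FreeAlgebra.lift ℂ A) f) = 0 := by
  constructor
  · rintro hf s - A -
    exact Matrix.trace_eq_zero_of_mem_commutatorSpan
      ((FreeAlgebra.lift ℂ A).map_mem_commutatorSpan hf)
  · intro H
    set e := FreeAlgebra.equivMonoidAlgebraFreeMonoid (R := ℂ) (X := Fin n)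
    have hall : ∀ s, 1 ≤ s → ∀ A : Fin n → Matrix (Fin s) (Fin s) ℂ,
        (MonoidAlgebra.lift ℂ _ _ (FreeMonoid.lift A) (e f)).trace = 0 := fun s hs A => by
      rw [← FreeAlgebra.lift_apply_eq_monoidAlgebra_lift]
      exact trace_lift_eq_zero_of_forall_isSelfAdjoint f (H s hs) A
    have hef := mem_commutatorSpan_of_sum_rotate_eq_zero (e f)
      (coeff_one_eq_zero_of_forall_trace _ (hall 1 le_rfl))
      (sum_rotate_eq_zero_of_forall_trace _ hall)
    show f ∈ commutatorSpan ℂ _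
    simpa using e.symm.toAlgHom.map_mem_commutatorSpan hef
end
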